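/- Let 1 ≤ h ≤ n, 0 ≤ m_2 ≤ m_1, 0 ≤ M_2 ≤ M_1, m_i < M_i for i = 1,2, and h·m_1 + (n−h)·m_2 ≤ a ≤ h·M_1 + (n−h)·M_2. Set ã = h·m_1 + (n−h)·M_2. If a > M_2·n and a ≥ ã, then the minimal element of S_a^[h] with respect to the majorization order is x_*(S_a^[h]) = ρ s^h + M_2 v^h with ρ = (a − M_2(n − h))/h, i.e. the vector whose first h components equal ρ and whose last n−h components equal M_2. -/

import Mathlib

open Finset

noncomputable section

/-- `sv n j` is the vector `s^j ∈ ℝ^n`: first `j` components equal `1`, the rest `0`. -/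
def sv (n j : ℕ) : Fin n → ℝ := fun i => if (i : ℕ) < j then 1 else 0

/-- `vv n j = s^n - s^j`: first `j` components equal `0`, the rest `1`. -/
def vv (n j : ℕ) : Fin n → ℝ := fun i => if (i : ℕ) < j then 0 else 1

/-- `ev n j` is the `j`-th standard basis vector (`j` counted from `1`). -/
def ev (n j : ℕ) : Fin n → ℝ := fun i => if (i : ℕ) + 1 = j then 1 else 0

/-- Standard inner product on `ℝ^n`. -/
def inn {n : ℕ} (x y : Fin n → ℝ) : ℝ := ∑ i, x i * y i

/-- Hadamard (componentwise) product. -/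
def had {n : ℕ} (x y : Fin n → ℝ) : Fin n → ℝ := fun i => x i * y i

/-- Sum of the first `k` components. -/
def psum {n : ℕ} (x : Fin n → ℝ) (k : ℕ) : ℝ := ∑ i : Fin n, if (i : ℕ) < k then x i else 0

/-- Majorization order: `x ⊴ y` (for vectors with nonincreasing components). -/
def Maj {n : ℕ} (x y : Fin n → ℝ) : Prop :=
  (∀ k : ℕ, 1 ≤ k → k ≤ n - 1 → psum x k ≤ psum y k) ∧ (∑ i, x i = ∑ i, y i)

/-- `Σ_a = {x ∈ ℝ^n : x_1 ≥ ... ≥ x_n ≥ 0, Σ x_i = a}`. -/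
def SigmaSet (n : ℕ) (a : ℝ) : Set (Fin n → ℝ) :=
  {x | (∀ i j : Fin n, i ≤ j → x j ≤ x i) ∧ (∀ i, 0 ≤ x i) ∧ (∑ i, x i = a)}

/-- `S_a^[h] = Σ_a ∩ {x : M₁ ≥ x_1 ≥ ... ≥ x_h ≥ m₁, M₂ ≥ x_{h+1} ≥ ... ≥ x_n ≥ m₂}`. -/
def Sh (n h : ℕ) (a M1 M2 m1 m2 : ℝ) : Set (Fin n → ℝ) :=
  SigmaSet n a ∩
    {x | (∀ i : Fin n, (i : ℕ) < h → m1 ≤ x i ∧ x i ≤ M1) ∧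
         (∀ i : Fin n, h ≤ (i : ℕ) → m2 ≤ x i ∧ x i ≤ M2)}

/-! The candidate `x_* = ρ s^h + M₂ v^h` puts as much mass as the constraints allow on the
tail, so every partial sum `x_1 + ... + x_k` with `k ≥ h` is smallest for `x_*`: the tail of
any `x ∈ S_a^[h]` is bounded by `M₂` componentwise. For `k < h` the first `h` components of `x_*`
are equal, and a nonincreasing `x` has `(x_1 + ... + x_k)/k ≥ (x_1 + ... + x_h)/h` (Chebyshev's
sum inequality against the indicator `s^k`), so the bound at `k = h` propagates down. The
bounds `M₂ n < a`, `ã ≤ a` and `a ≤ h M₁ + (n - h) M₂` place `ρ` in `[max M₂ m₁, M₁]`, which makes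
`x_*` a nonincreasing element of `S_a^[h]`. -/

def stepVec (n h : ℕ) (p q : ℝ) : Fin n → ℝ := fun i => if (i : ℕ) < h then p else q

section

variable {n : ℕ}

lemma sum_ite_val_lt {k : ℕ} (hk : k ≤ n) (p q : ℝ) :
    ∑ i : Fin n, (if (i : ℕ) < k then p else q) = k * p + (n - k : ℝ) * q := by
  have hcard := card_filter_add_card_filter_not (s := (univ : Finset (Fin n)))
    (fun i : Fin n => (i : ℕ) < k)
  rw [Fin.card_filter_val_lt, min_eq_right hk, card_univ, Fintype.card_fin] at hcard
  rw [sum_ite, sum_const, sum_const, Fin.card_filter_val_lt, min_eq_right hk, nsmul_eq_mul,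
    nsmul_eq_mul, (by omega : #{i : Fin n | ¬ i.val < k} = n - k), Nat.cast_sub hk]

lemma psum_eq_sum_filter (x : Fin n → ℝ) (k : ℕ) :
    psum x k = ∑ i : Fin n with i.val < k, x i :=
  (sum_filter _ _).symm

lemma psum_le_psum_of_sum_eq_of_tail_le {x y : Fin n → ℝ} {k : ℕ}
    (hsum : ∑ i, y i = ∑ i, x i) (htail : ∀ i : Fin n, k ≤ (i : ℕ) → x i ≤ y i) :
    psum y k ≤ psum x k := by
  have hx := sum_filter_add_sum_filter_not univ (fun i : Fin n => (i : ℕ) < k) x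
  have hy := sum_filter_add_sum_filter_not univ (fun i : Fin n => (i : ℕ) < k) y
  have hle : ∑ i : Fin n with ¬ i.val < k, x i ≤ ∑ i : Fin n with ¬ i.val < k, y i :=
    sum_le_sum fun i hi => htail i (not_lt.1 (mem_filter.1 hi).2)
  rw [psum_eq_sum_filter, psum_eq_sum_filter]
  linarith

lemma antitone_sv (n k : ℕ) : Antitone (sv n k) := by
  intro i j hij
  have : (i : ℕ) ≤ j := hij
  simp only [sv]
  split_ifs <;> first | omega | norm_num

lemma psum_sv_of_le {h k : ℕ} (hkh : k ≤ h) (hhn : h ≤ n) : psum (sv n k) h = k := by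
  have hsv : ∀ i : Fin n, (if (i : ℕ) < h then sv n k i else 0) = if (i : ℕ) < k then 1 else 0 := by
    intro i
    simp only [sv]
    split_ifs <;> first | rfl | omega
  simp only [psum, hsv, sum_ite_val_lt (hkh.trans hhn)]
  ring

lemma psum_mul_sv_of_le (x : Fin n → ℝ) {h k : ℕ} (hkh : k ≤ h) :
    psum (fun i => x i * sv n k i) h = psum x k := by
  simp only [psum, sv]
  refine sum_congr rfl fun i _ => ?_
  split_ifs <;> first | omega | ring

lemma natCast_mul_psum_le_of_antitone {x : Fin n → ℝ} (hx : Antitone x) {h k : ℕ}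
    (hkh : k ≤ h) (hhn : h ≤ n) : (k : ℝ) * psum x h ≤ h * psum x k := by
  have key := ((hx.monovary (antitone_sv n k)).monovaryOn
    (univ.filter fun i : Fin n => (i : ℕ) < h)).sum_mul_sum_le_card_mul_sum
  rw [← psum_eq_sum_filter, ← psum_eq_sum_filter, ← psum_eq_sum_filter, psum_sv_of_le hkh hhn,
    psum_mul_sv_of_le x hkh, Fin.card_filter_val_lt, min_eq_right hhn] at key
  linarith

lemma psum_stepVec_of_le {h k : ℕ} (hkh : k ≤ h) (hhn : h ≤ n) (p q : ℝ) :
    psum (stepVec n h p q) k = k * p := by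
  have hstep : ∀ i : Fin n,
      (if (i : ℕ) < k then stepVec n h p q i else 0) = if (i : ℕ) < k then p else 0 := by
    intro i
    simp only [stepVec]
    split_ifs <;> first | rfl | omega
  simp only [psum, hstep, sum_ite_val_lt (hkh.trans hhn)]
  ring

lemma psum_stepVec_le_of_antitone {h k : ℕ} (hh : 0 < h) (hhn : h ≤ n) (hkh : k ≤ h)
    {p q : ℝ} {x : Fin n → ℝ} (hx : Antitone x) (hle : psum (stepVec n h p q) h ≤ psum x h) :
    psum (stepVec n h p q) k ≤ psum x k := by
  rw [psum_stepVec_of_le le_rfl hhn] at hle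
  rw [psum_stepVec_of_le hkh hhn]
  have hhR : (0 : ℝ) < h := by exact_mod_cast hh
  refine le_of_mul_le_mul_left ?_ hhR
  calc (h : ℝ) * (k * p) = k * (h * p) := by ring
    _ ≤ k * psum x h := by gcongr
    _ ≤ h * psum x k := natCast_mul_psum_le_of_antitone hx hkh hhn

lemma maj_stepVec {h : ℕ} (hh : 0 < h) (hhn : h ≤ n) {p q : ℝ} {x : Fin n → ℝ}
    (hx : Antitone x) (hsum : ∑ i, stepVec n h p q i = ∑ i, x i)
    (htail : ∀ i : Fin n, h ≤ (i : ℕ) → x i ≤ q) : Maj (stepVec n h p q) x := by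
  have tail_le : ∀ k, h ≤ k → psum (stepVec n h p q) k ≤ psum x k := fun k hk =>
    psum_le_psum_of_sum_eq_of_tail_le hsum fun i hi => by
      simpa [stepVec, not_lt.2 (hk.trans hi)] using htail i (hk.trans hi)
  refine ⟨fun k _ _ => ?_, hsum⟩
  rcases le_total h k with hhk | hkh
  · exact tail_le k hhk
  · exact psum_stepVec_le_of_antitone hh hhn hkh hx (tail_le h le_rfl)

lemma stepVec_mem_Sh {h : ℕ} (hhn : h ≤ n) {a p q m1 m2 M1 : ℝ}
    (hsum : h * p + (n - h : ℝ) * q = a) (hm1 : m1 ≤ p) (hM1 : p ≤ M1) (hqp : q ≤ p)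
    (hq : 0 ≤ q) (hm2 : m2 ≤ q) : stepVec n h p q ∈ Sh n h a M1 q m1 m2 := by
  refine ⟨⟨fun i j hij => ?_, fun i => ?_, ?_⟩, fun i hi => ?_, fun i hi => ?_⟩
  · have : (i : ℕ) ≤ j := hij
    simp only [stepVec]
    split_ifs <;> linarith
  · simp only [stepVec]
    split_ifs <;> linarith
  · simpa only [stepVec] using (sum_ite_val_lt hhn p q).trans hsum
  · simpa only [stepVec, if_pos hi] using ⟨hm1, hM1⟩
  · simpa only [stepVec, if_neg (not_lt.2 hi)] using ⟨hm2, le_rfl⟩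

end

theorem minimal_element_of_Sh_high_general (n h : ℕ) (hh : 1 ≤ h) (hhn : h ≤ n)
    (a m1 m2 M1 M2 : ℝ)
    (hM2 : 0 ≤ M2)
    (hmM2 : m2 < M2)
    (haup : a ≤ h * M1 + (n - h : ℝ) * M2)
    (atilde : ℝ) (hatilde : atilde = h * m1 + (n - h : ℝ) * M2)
    (hcase1 : M2 * n < a) (hcase2 : atilde ≤ a)
    (ρ : ℝ) (hρ : ρ = (a - M2 * ((n : ℝ) - h)) / h)
    (xmin : Fin n → ℝ)
    (hxmin : xmin = fun i => ρ * sv n h i + M2 * vv n h i) :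
    xmin ∈ Sh n h a M1 M2 m1 m2 ∧ ∀ x ∈ Sh n h a M1 M2 m1 m2, Maj xmin x := by
  have hhR : (0 : ℝ) < h := by exact_mod_cast hh
  have hρsum : h * ρ + (n - h : ℝ) * M2 = a := by
    rw [hρ]
    field_simp
    ring
  have hxmin_step : xmin = stepVec n h ρ M2 := by
    subst hxmin
    funext i
    simp only [stepVec, sv, vv]
    split_ifs <;> ring
  have hm1ρ : m1 ≤ ρ := le_of_mul_le_mul_left (by linarith) hhR
  have hρM1 : ρ ≤ M1 := le_of_mul_le_mul_left (by linarith) hhR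
  have hM2ρ : M2 ≤ ρ := le_of_mul_le_mul_left (by linarith) hhR
  have hmem := stepVec_mem_Sh hhn hρsum hm1ρ hρM1 hM2ρ hM2 hmM2.le
  rw [hxmin_step]
  refine ⟨hmem, fun x ⟨⟨hx, _, hxsum⟩, _, htail⟩ => ?_⟩
  exact maj_stepVec hh hhn hx (hmem.1.2.2.trans hxsum.symm) fun i hi => (htail i hi).2

/-- Minimal element of `S_a^[h]` when `a > M₂ n` and `a ≥ ã`:
`ρ s^h + M₂ v^h` with `ρ = (a - M₂(n - h))/h`. -/
theorem minimal_element_of_Sh_high (n h : ℕ) (hh : 1 ≤ h) (hhn : h ≤ n)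
    (a m1 m2 M1 M2 : ℝ) (ha : 0 < a)
    (hm2 : 0 ≤ m2) (hm21 : m2 ≤ m1) (hM2 : 0 ≤ M2) (hM21 : M2 ≤ M1)
    (hmM1 : m1 < M1) (hmM2 : m2 < M2)
    (halow : h * m1 + (n - h : ℝ) * m2 ≤ a) (haup : a ≤ h * M1 + (n - h : ℝ) * M2)
    (atilde : ℝ) (hatilde : atilde = h * m1 + (n - h : ℝ) * M2)
    (hcase1 : M2 * n < a) (hcase2 : atilde ≤ a)
    (ρ : ℝ) (hρ : ρ = (a - M2 * ((n : ℝ) - h)) / h)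
    (xmin : Fin n → ℝ)
    (hxmin : xmin = fun i => ρ * sv n h i + M2 * vv n h i) :
    xmin ∈ Sh n h a M1 M2 m1 m2 ∧ ∀ x ∈ Sh n h a M1 M2 m1 m2, Maj xmin x :=
  minimal_element_of_Sh_high_general n h hh hhn a m1 m2 M1 M2 hM2 hmM2 haup atilde hatilde hcase1
    hcase2 ρ hρ xmin hxmin
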